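/- Let Γ = (V,C,E) be a finite bipartite graph with variable nodes V (|V| = n) and check nodes C, let q be a channel kernel, let s satisfy q(s_i|+1) > 0 for all i ∈ V, and let η ∈ ℝ. Then the perturbed partition function satisfies the loop-series identity Z(Γ,s,η) = (∏_{i∈V} q(s_i|+1)) · (1 + Σ_S e^{−2η|S|} ∏_{i∈S} q(s_i|−1)/q(s_i|+1)), where the sum runs over all nonempty subsets S ⊆ V such that |∂a ∩ S| is even for every check node a ∈ C. (When every variable node of Γ has degree l, such subsets S are exactly the vertex sets of the ferromagnetic loops g ∈ L_Γ^+, and each summand equals the ferromagnetic loop weight K_+(g).) -/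
import Mathlib


open Finset

noncomputable section

/-- Spin value of a Boolean: `true ↦ +1`, `false ↦ -1`. -/
def spin (b : Bool) : ℝ := if b then 1 else -1

/-- Neighbors (variable nodes) of a check node `a` in the bipartite graph
given by the edge set `G`. -/
def nbrV {n m : ℕ} (G : Finset (Fin n × Fin m)) (a : Fin m) : Finset (Fin n) :=
  Finset.univ.filter fun i => (i, a) ∈ G

/-- The perturbed partition function
`Z(Γ,s,η) = Σ_σ ∏_a ½(1 + ∏_{i∈∂a} σ_i) ∏_i q(s_i|σ_i) e^{η(σ_i-1)}`. -/
def Zpert {n m : ℕ} (q : ℝ → ℝ → ℝ) (G : Finset (Fin n × Fin m)) (s : Fin n → ℝ)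
    (η : ℝ) : ℝ :=
  ∑ σ : Fin n → Bool,
    (∏ a, (1 / 2 : ℝ) * (1 + ∏ i ∈ nbrV G a, spin (σ i))) *
      ∏ i, q (s i) (spin (σ i)) * Real.exp (η * (spin (σ i) - 1))

/-- The bijection between spin configurations and their sets of `-1` spins. -/
def spinEquiv (n : ℕ) : (Fin n → Bool) ≃ Finset (Fin n) where
  toFun σ := Finset.univ.filter fun i => σ i = false
  invFun S := fun i => decide (i ∉ S)
  left_inv σ := by
    funext i
    by_cases h : σ i = false <;> simp [h]
  right_inv S := by
    ext i
    by_cases h : i ∈ S <;> simp [h]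

lemma spin_inv_mem {n : ℕ} (S : Finset (Fin n)) (i : Fin n) :
    spin ((spinEquiv n).symm S i) = if i ∈ S then -1 else 1 := by
  by_cases h : i ∈ S <;> simp [spinEquiv, spin, h]

lemma prod_ite_neg_one {n : ℕ} (T S : Finset (Fin n)) :
    (∏ i ∈ T, (if i ∈ S then (-1 : ℝ) else 1)) = (-1 : ℝ) ^ ((T ∩ S).card) := by
  rw [Finset.prod_ite, Finset.prod_const, Finset.prod_const, one_pow, mul_one,
    Finset.filter_mem_eq_inter]

lemma half_factor (k : ℕ) :
    (1 / 2 : ℝ) * (1 + (-1 : ℝ) ^ k) = if Even k then 1 else 0 := by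
  rcases Nat.even_or_odd k with h | h
  · rw [h.neg_one_pow]; norm_num [h]
  · rw [h.neg_one_pow]; simp [Nat.not_even_iff_odd.mpr h]

/-- **The loop-series identity.**
`Z(Γ,s,η) = (∏_i q(s_i|+1)) (1 + Σ_S e^{-2η|S|} ∏_{i∈S} q(s_i|-1)/q(s_i|+1))`,
where the sum runs over all nonempty subsets `S` of the variable nodes such
that `|∂a ∩ S|` is even for every check node `a` (these are exactly the vertex
sets of the ferromagnetic loops, and each summand is the ferromagnetic loop
weight `K_+`). -/
theorem loop_series_identity (n m : ℕ) (G : Finset (Fin n × Fin m))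
    (q : ℝ → ℝ → ℝ) (s : Fin n → ℝ) (hs : ∀ i, 0 < q (s i) 1) (η : ℝ) :
    Zpert q G s η
      = (∏ i, q (s i) 1) *
        (1 + ∑ S ∈ Finset.univ.powerset.filter
            (fun S : Finset (Fin n) => S.Nonempty ∧ ∀ a, Even ((nbrV G a ∩ S).card)),
          Real.exp (-2 * η * (S.card : ℝ)) * ∏ i ∈ S, q (s i) (-1) / q (s i) 1) := by
  classical
  have hq : ∀ i, q (s i) 1 ≠ 0 := fun i => (hs i).ne'
  rw [Zpert, ← Equiv.sum_comp (spinEquiv n).symm]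
  have key : ∀ S : Finset (Fin n),
      (∏ a, (1 / 2 : ℝ) * (1 + ∏ i ∈ nbrV G a, spin ((spinEquiv n).symm S i))) *
        (∏ i, q (s i) (spin ((spinEquiv n).symm S i)) *
          Real.exp (η * (spin ((spinEquiv n).symm S i) - 1)))
      = (if ∀ a, Even ((nbrV G a ∩ S).card) then (1 : ℝ) else 0) *
        ((∏ i, q (s i) 1) *
          (Real.exp (-2 * η * (S.card : ℝ)) * ∏ i ∈ S, q (s i) (-1) / q (s i) 1)) := by
    intro S
    have h1 : (∏ a, (1 / 2 : ℝ) * (1 + ∏ i ∈ nbrV G a, spin ((spinEquiv n).symm S i)))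
        = if ∀ a, Even ((nbrV G a ∩ S).card) then (1 : ℝ) else 0 := by
      have : ∀ a : Fin m,
          (1 / 2 : ℝ) * (1 + ∏ i ∈ nbrV G a, spin ((spinEquiv n).symm S i))
          = if Even ((nbrV G a ∩ S).card) then (1 : ℝ) else 0 := by
        intro a
        rw [show (∏ i ∈ nbrV G a, spin ((spinEquiv n).symm S i))
            = ∏ i ∈ nbrV G a, (if i ∈ S then (-1 : ℝ) else 1) from
          Finset.prod_congr rfl fun i _ => spin_inv_mem S i]
        rw [prod_ite_neg_one, half_factor]
      rw [Finset.prod_congr rfl fun a _ => this a, Finset.prod_boole]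
      simp
    have h2 : (∏ i, q (s i) (spin ((spinEquiv n).symm S i)) *
          Real.exp (η * (spin ((spinEquiv n).symm S i) - 1)))
        = (∏ i, q (s i) 1) *
          (Real.exp (-2 * η * (S.card : ℝ)) * ∏ i ∈ S, q (s i) (-1) / q (s i) 1) := by
      have step : ∀ i : Fin n, q (s i) (spin ((spinEquiv n).symm S i)) *
            Real.exp (η * (spin ((spinEquiv n).symm S i) - 1))
          = if i ∈ S then q (s i) (-1) * Real.exp (η * (-2)) else q (s i) 1 := by
        intro i
        rw [spin_inv_mem]
        by_cases h : i ∈ S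
        · rw [if_pos h, if_pos h]; norm_num
        · rw [if_neg h, if_neg h]; norm_num
      rw [Finset.prod_congr rfl fun i _ => step i, Finset.prod_ite,
        Finset.filter_mem_eq_inter, Finset.univ_inter]
      have hfilter : (Finset.univ.filter fun i => i ∉ S) = Sᶜ := by
        ext i; simp
      rw [hfilter, Finset.prod_mul_distrib, Finset.prod_const]
      have hexp : Real.exp (η * (-2)) ^ S.card = Real.exp (-2 * η * (S.card : ℝ)) := by
        rw [← Real.exp_nat_mul]; ring_nf
      rw [hexp]
      have hsplit : (∏ i, q (s i) 1) = (∏ i ∈ S, q (s i) 1) * ∏ i ∈ Sᶜ, q (s i) 1 :=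
        (Finset.prod_mul_prod_compl S _).symm
      rw [hsplit]
      have hratio : (∏ i ∈ S, q (s i) (-1)) =
          (∏ i ∈ S, q (s i) 1) * ∏ i ∈ S, q (s i) (-1) / q (s i) 1 := by
        rw [← Finset.prod_mul_distrib]
        exact Finset.prod_congr rfl fun i _ => (mul_div_cancel₀ _ (hq i)).symm
      rw [hratio]; ring
    rw [h1, h2]
  rw [Finset.sum_congr rfl fun S _ => key S]
  have hsum : ∀ S : Finset (Fin n),
      (if ∀ a, Even ((nbrV G a ∩ S).card) then (1 : ℝ) else 0) *
        ((∏ i, q (s i) 1) *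
          (Real.exp (-2 * η * (S.card : ℝ)) * ∏ i ∈ S, q (s i) (-1) / q (s i) 1))
      = if ∀ a, Even ((nbrV G a ∩ S).card) then
          (∏ i, q (s i) 1) *
            (Real.exp (-2 * η * (S.card : ℝ)) * ∏ i ∈ S, q (s i) (-1) / q (s i) 1)
        else 0 := by
    intro S; split <;> simp
  rw [Finset.sum_congr rfl fun S _ => hsum S, ← Finset.sum_filter]
  have hset : (Finset.univ : Finset (Finset (Fin n))).filter
        (fun S => ∀ a, Even ((nbrV G a ∩ S).card))
      = insert ∅ (Finset.univ.powerset.filter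
          (fun S : Finset (Fin n) => S.Nonempty ∧ ∀ a, Even ((nbrV G a ∩ S).card))) := by
    rw [Finset.powerset_univ]
    ext S
    simp only [Finset.mem_filter, Finset.mem_insert, Finset.mem_univ, true_and]
    constructor
    · intro h
      rcases S.eq_empty_or_nonempty with rfl | hne
      · exact Or.inl rfl
      · exact Or.inr ⟨hne, h⟩
    · rintro (rfl | ⟨_, h⟩)
      · intro a; simp
      · exact h
  rw [hset, Finset.sum_insert (by simp)]
  simp only [Finset.card_empty, Nat.cast_zero, mul_zero, Real.exp_zero,
    Finset.prod_empty, mul_one, one_mul]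
  rw [mul_add, mul_one, Finset.mul_sum]
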